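/- As m → ∞, the partial exponential sum satisfies Σ_{i=0}^{m} (m+1)^i/i! ~ e^{m+1}/2, i.e., lim_{m→∞} e^{-(m+1)}·Σ_{i=0}^{m}(m+1)^i/i! = 1/2. -/

import Mathlib

/-!
With `n = m + 1`, Poisson–Gamma duality writes `exp (-n) * ∑ i ≤ m, n ^ i / i !` as the Gamma tail
`∫ t in Ioi n, t ^ m * exp (-t) / m !`. The substitution `t = n + √n * s` turns it into
`√n * n ^ m * exp (-n) / m !` times `∫ s in Ioi 0, (1 + s / √n) ^ m * exp (-(√n * s))`.
By Stirling the prefactor tends to `1 / √(2π)`; by dominated convergence (pointwise limit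
`exp (-s ^ 2 / 2)`, dominated by `exp ((1 - s) / 2)`) the integral tends to `√(2π) / 2`.
-/

open Finset Real Filter Topology MeasureTheory Set Stirling
open scoped Nat

lemma log_one_add_le_sub_sq_div {x : ℝ} (hx : 0 ≤ x) :
    log (1 + x) ≤ x - x ^ 2 / (2 * (1 + x)) := by
  have h := self_le_sinh_iff.2 (log_nonneg (by linarith : (1 : ℝ) ≤ 1 + x))
  rw [sinh_log (by positivity)] at h
  convert h using 1
  field_simp
  ring

lemma hasDerivAt_sum_range_pow_div_factorial (m : ℕ) (t : ℝ) :
    HasDerivAt (fun t : ℝ => ∑ i ∈ range (m + 1), t ^ i / i !)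
      (∑ i ∈ range m, t ^ i / i !) t := by
  induction m with
  | zero => simpa using hasDerivAt_const t (1 : ℝ)
  | succ m ih =>
    simp only [sum_range_succ _ (m + 1)]
    refine (ih.add ((hasDerivAt_pow (m + 1) t).div_const ((m + 1)! : ℝ))).congr_deriv ?_
    rw [sum_range_succ, Nat.factorial_succ]
    push_cast
    field_simp

lemma hasDerivAt_neg_exp_neg_mul_sum_range (m : ℕ) (t : ℝ) :
    HasDerivAt (fun t : ℝ => -(exp (-t) * ∑ i ∈ range (m + 1), t ^ i / i !))
      (t ^ m / m ! * exp (-t)) t := by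
  refine ((hasDerivAt_neg' t).exp.mul (hasDerivAt_sum_range_pow_div_factorial m t)).neg
    |>.congr_deriv ?_
  rw [sum_range_succ]
  ring

lemma tendsto_exp_neg_mul_sum_range (m : ℕ) :
    Tendsto (fun t => exp (-t) * ∑ i ∈ range (m + 1), t ^ i / i !) atTop (𝓝 0) := by
  have h := tendsto_finsetSum (range (m + 1)) fun i _ =>
    (tendsto_pow_mul_exp_neg_atTop_nhds_zero i).div_const (i ! : ℝ)
  simp only [zero_div, sum_const_zero] at h
  refine h.congr fun t => ?_
  rw [mul_sum]
  exact sum_congr rfl fun i _ => by ring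

/-- Poisson–Gamma duality, after the substitution `t = a + b * s` in
`∫ t in Ioi a, t ^ m / m ! * exp (-t)`. -/
lemma exp_neg_mul_sum_range_eq_integral {a b : ℝ} (ha : 0 ≤ a) (hb : 0 < b) (m : ℕ) :
    exp (-a) * ∑ i ∈ range (m + 1), a ^ i / i ! =
      ∫ s in Ioi 0, (a + b * s) ^ m / m ! * exp (-(a + b * s)) * b := by
  have hderiv : ∀ s ∈ Ici (0 : ℝ), HasDerivAt
      (fun s => -(exp (-(a + b * s)) * ∑ i ∈ range (m + 1), (a + b * s) ^ i / i !))
      ((a + b * s) ^ m / m ! * exp (-(a + b * s)) * b) s := fun s _ =>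
    (hasDerivAt_neg_exp_neg_mul_sum_range m _).comp s
      (((hasDerivAt_id s).const_mul b).const_add a |>.congr_deriv (mul_one b))
  have hnonneg : ∀ s ∈ Ioi (0 : ℝ), 0 ≤ (a + b * s) ^ m / m ! * exp (-(a + b * s)) * b :=
    fun s hs => by
      have : 0 ≤ a + b * s := by nlinarith [mem_Ioi.1 hs]
      positivity
  have hlim : Tendsto
      (fun s => -(exp (-(a + b * s)) * ∑ i ∈ range (m + 1), (a + b * s) ^ i / i !))
      atTop (𝓝 0) := by
    simpa using ((tendsto_exp_neg_mul_sum_range m).comp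
      (tendsto_atTop_add_const_left _ a (tendsto_id.const_mul_atTop hb))).neg
  rw [integral_Ioi_of_hasDerivAt_of_nonneg' hderiv hnonneg hlim]
  simp

/-- `t ^ m * exp (-t)` at `t = (m + 1) + √(m + 1) * s`, divided by its value at `s = 0`. -/
noncomputable def gammaKernel (m : ℕ) (s : ℝ) : ℝ :=
  (1 + s / √(m + 1)) ^ m * exp (-(√(m + 1) * s))

lemma continuous_gammaKernel (m : ℕ) : Continuous (gammaKernel m) := by
  unfold gammaKernel
  fun_prop

lemma gammaKernel_eq_exp (m : ℕ) {s : ℝ} (hs : 0 ≤ s) :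
    gammaKernel m s = exp (m * log (1 + s / √(m + 1)) - √(m + 1) * s) := by
  rw [sub_eq_add_neg, exp_add, exp_nat_mul, exp_log (by positivity), gammaKernel]

/-- With `x = s / σ` the left side is `σ ^ 2 * (log (1 + x) - x) - log (1 + x)` and
`σ ^ 2 * x ^ 2 = s ^ 2`. -/
lemma mul_log_one_add_div_sub_mul_mem_Icc {m σ s : ℝ} (hσ : 0 < σ) (hm : σ ^ 2 = m + 1)
    (hs : 0 ≤ s) :
    m * log (1 + s / σ) - σ * s ∈
      Set.Icc (-(s ^ 2 / (s / σ + 2)) - log (1 + s / σ))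
        (-(s ^ 2 / (2 * (1 + s / σ))) - log (1 + s / σ)) := by
  have hx : 0 ≤ s / σ := by positivity
  have hexp : m * log (1 + s / σ) - σ * s =
      σ ^ 2 * (log (1 + s / σ) - s / σ) - log (1 + s / σ) := by
    rw [show m = σ ^ 2 - 1 by linarith]
    field_simp
    ring
  have hlower := le_log_one_add_of_nonneg hx
  have hupper := log_one_add_le_sub_sq_div hx
  constructor
  · rw [hexp]
    have : -(s ^ 2 / (s / σ + 2)) = σ ^ 2 * (2 * (s / σ) / (s / σ + 2) - s / σ) := by
      field_simp
      ring
    nlinarith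
  · rw [hexp]
    have : -(s ^ 2 / (2 * (1 + s / σ))) =
        σ ^ 2 * (s / σ - (s / σ) ^ 2 / (2 * (1 + s / σ)) - s / σ) := by
      field_simp
      ring
    nlinarith

lemma gammaKernel_exponent_mem_Icc (m : ℕ) {s : ℝ} (hs : 0 ≤ s) :
    (m * log (1 + s / √(m + 1)) - √(m + 1) * s) ∈
      Set.Icc (-(s ^ 2 / (s / √(m + 1) + 2)) - log (1 + s / √(m + 1)))
        (-(s ^ 2 / (2 * (1 + s / √(m + 1)))) - log (1 + s / √(m + 1))) :=
  mul_log_one_add_div_sub_mul_mem_Icc (by positivity) (sq_sqrt (by positivity)) hs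

lemma gammaKernel_nonneg (m : ℕ) {s : ℝ} (hs : 0 ≤ s) : 0 ≤ gammaKernel m s := by
  rw [gammaKernel_eq_exp m hs]
  exact (exp_pos _).le

lemma gammaKernel_le (m : ℕ) {s : ℝ} (hs : 0 ≤ s) : gammaKernel m s ≤ exp ((1 - s) / 2) := by
  rw [gammaKernel_eq_exp m hs, exp_le_exp]
  have hσ : 1 ≤ √((m : ℝ) + 1) := one_le_sqrt.2 (by linarith [m.cast_nonneg (α := ℝ)])
  have hx0 : 0 ≤ s / √(m + 1) := by positivity
  have hx : s / √(m + 1) ≤ s := div_le_self hs hσ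
  have hlog : 0 ≤ log (1 + s / √(m + 1)) := log_nonneg (by linarith)
  have hquad : -(s ^ 2 / (2 * (1 + s / √(m + 1)))) ≤ (1 - s) / 2 := by
    rw [neg_le, le_div_iff₀ (by positivity)]
    rcases le_total s 1 with h | h <;> nlinarith
  linarith [(gammaKernel_exponent_mem_Icc m hs).2]

lemma tendsto_div_sqrt_natCast_add_one (s : ℝ) :
    Tendsto (fun m : ℕ => s / √(m + 1)) atTop (𝓝 0) :=
  tendsto_const_nhds.div_atTop <| tendsto_sqrt_atTop.comp <|
    tendsto_atTop_add_const_right _ 1 tendsto_natCast_atTop_atTop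

/-- Both bounds of the exponent are continuous in `x = s / √(m + 1) → 0`, with value
`-s ^ 2 / 2` at `x = 0`. -/
lemma tendsto_gammaKernel {s : ℝ} (hs : 0 ≤ s) :
    Tendsto (fun m => gammaKernel m s) atTop (𝓝 (exp (-(1 / 2) * s ^ 2))) := by
  have hx := tendsto_div_sqrt_natCast_add_one s
  have hlog : Tendsto (fun m : ℕ => log (1 + s / √(m + 1))) atTop (𝓝 0) := by
    simpa using (hx.const_add 1).log (by norm_num)
  have hlower : Tendsto
      (fun m : ℕ => -(s ^ 2 / (s / √(m + 1) + 2)) - log (1 + s / √(m + 1)))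
      atTop (𝓝 (-(1 / 2) * s ^ 2)) := by
    rw [show -(1 / 2) * s ^ 2 = -(s ^ 2 / (0 + 2)) - 0 by ring]
    exact ((tendsto_const_nhds (x := s ^ 2)).div (hx.add_const 2) (by norm_num)).neg.sub hlog
  have hupper : Tendsto
      (fun m : ℕ => -(s ^ 2 / (2 * (1 + s / √(m + 1)))) - log (1 + s / √(m + 1)))
      atTop (𝓝 (-(1 / 2) * s ^ 2)) := by
    rw [show -(1 / 2) * s ^ 2 = -(s ^ 2 / (2 * (1 + 0))) - 0 by ring]
    exact ((tendsto_const_nhds (x := s ^ 2)).div ((hx.const_add 1).const_mul 2)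
      (by norm_num)).neg.sub hlog
  have hexponent := tendsto_of_tendsto_of_tendsto_of_le_of_le hlower hupper
    (fun m => (gammaKernel_exponent_mem_Icc m hs).1)
    (fun m => (gammaKernel_exponent_mem_Icc m hs).2)
  exact ((continuous_exp.tendsto _).comp hexponent).congr fun m => (gammaKernel_eq_exp m hs).symm

lemma tendsto_integral_gammaKernel :
    Tendsto (fun m => ∫ s in Ioi 0, gammaKernel m s) atTop (𝓝 (√(2 * π) / 2)) := by
  have hbound : IntegrableOn (fun s : ℝ => exp ((1 - s) / 2)) (Ioi 0) := by
    have hexp := exp_neg_integrableOn_Ioi 0 (by norm_num : (0 : ℝ) < 1 / 2)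
    refine IntegrableOn.congr_fun (hexp.const_mul (exp (1 / 2))) (fun s _ => ?_) measurableSet_Ioi
    rw [← exp_add]
    ring_nf
  have h := tendsto_integral_of_dominated_convergence _
    (fun m => (continuous_gammaKernel m).aestronglyMeasurable) hbound
    (fun m => (ae_restrict_iff' measurableSet_Ioi).2 <| ae_of_all _ fun s hs => by
      rw [norm_of_nonneg]
      exacts [gammaKernel_le m hs.le, gammaKernel_nonneg m hs.le])
    ((ae_restrict_iff' measurableSet_Ioi).2 <| ae_of_all _ fun s hs =>
      tendsto_gammaKernel hs.le)
  rwa [integral_gaussian_Ioi, div_div_eq_mul_div, div_one, mul_comm] at h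

lemma inv_sqrt_two_mul_stirlingSeq_succ (m : ℕ) :
    (√2 * stirlingSeq (m + 1))⁻¹ = √(m + 1) * (m + 1) ^ m * exp (-(m + 1)) / m ! := by
  have hσ : √((m : ℝ) + 1) ≠ 0 := by positivity
  rw [stirlingSeq, Nat.factorial_succ, div_pow, exp_one_pow, exp_neg]
  push_cast
  rw [sqrt_mul zero_le_two]
  field_simp
  ring

lemma exp_neg_mul_sum_range_eq_mul_integral_gammaKernel (m : ℕ) :
    exp (-(m + 1)) * ∑ i ∈ range (m + 1), ((m : ℝ) + 1) ^ i / i ! =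
      (√2 * stirlingSeq (m + 1))⁻¹ * ∫ s in Ioi 0, gammaKernel m s := by
  rw [inv_sqrt_two_mul_stirlingSeq_succ, ← integral_const_mul]
  simp only [gammaKernel]
  set n : ℝ := m + 1
  have hn : 0 < n := by positivity
  rw [exp_neg_mul_sum_range_eq_integral hn.le (sqrt_pos.2 hn)]
  congr 1 with s
  have hscale : n * (s / √n) = √n * s := calc
    n * (s / √n) = √n * √n * (s / √n) := by rw [mul_self_sqrt hn.le]
    _ = √n * s := by field_simp
  have hshift : n + √n * s = n * (1 + s / √n) := by rw [mul_add, mul_one, hscale]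
  rw [hshift, mul_pow, mul_add, mul_one, hscale, neg_add, exp_add]
  ring

theorem partial_exp_sum_asymptotic :
    Tendsto
      (fun m : ℕ =>
        Real.exp (-((m : ℝ) + 1)) *
          ∑ i ∈ Finset.range (m + 1), ((m : ℝ) + 1) ^ i / (Nat.factorial i : ℝ))
      atTop (nhds (1 / 2)) := by
  have hstirling :
      Tendsto (fun m : ℕ => √2 * stirlingSeq (m + 1)) atTop (𝓝 (√(2 * π))) := by
    rw [sqrt_mul zero_le_two]
    exact (tendsto_stirlingSeq_sqrt_pi.comp (tendsto_add_atTop_nat 1)).const_mul _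
  have hlim := (hstirling.inv₀ (by positivity)).mul tendsto_integral_gammaKernel
  rw [show (√(2 * π))⁻¹ * (√(2 * π) / 2) = 1 / 2 by field_simp] at hlim
  simpa only [exp_neg_mul_sum_range_eq_mul_integral_gammaKernel] using hlim
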